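/- For the subshift X(M), the number of n-periodic points is p_n(X(M)) = (2M+1)^n + (M+2)^n − ∑_{i=0}^{n/2} binom(n,i) 2^i (M^i + M^{n−i}) + binom(n, n/2)(2M)^{n/2} if n is even, and p_n(X(M)) = (2M+1)^n + (M+2)^n − ∑_{i=0}^{(n−1)/2} binom(n,i) 2^i (M^i + M^{n−i}) if n is odd. (Note: in the odd case the subtracted sum appears with coefficient as stated, matching the identity p_n = p(G'_1) + p(G''_1) − (∑_{i=0}^{⌊n/2⌋} binom(n,i)(2M)^i) − (∑_{i=0}^{⌊n/2⌋} binom(n,i) 2^i M^{n−i}) + p_n(E^∞).) -/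

import Mathlib

open PowerSeries

namespace XShift

/-- The alphabet `Σ₁ = {λ, ξ, ρ₁,…,ρ_M, η₁,…,η_M}` of the subshift `X(M)`. -/
inductive Letter1 (M : ℕ) : Type where
  | lam
  | xi
  | rho (i : Fin M)
  | eta (i : Fin M)
  deriving DecidableEq

/-- Elements of the monoid `M₁(M)`: `none` is zero; a nonzero element is a reduced
word consisting of right letters (`(false, i)` for `ρᵢ`, `(true, i)` for `ηᵢ`)
followed by left letters (`false` for `λ`, `true` for `ξ`, stored in reverse order).
`some ([], [])` is the identity. -/
abbrev El1 (M : ℕ) : Type := Option (List (Bool × Fin M) × List Bool)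

/-- The identity of `M₁(M)`. -/
def one1 (M : ℕ) : El1 M := some ([], [])

/-- Multiplication by a generator, implementing `λρᵢ = 1`, `ξηᵢ = 1`, `ληᵢ = 0`,
`ξρᵢ = 0`. -/
def step1 (M : ℕ) : El1 M → Letter1 M → El1 M
  | none, _ => none
  | some (r, l), .lam => some (r, false :: l)
  | some (r, l), .xi => some (r, true :: l)
  | some (r, l), .rho i =>
      match l with
      | [] => some (r ++ [(false, i)], [])
      | b :: t => if b = false then some (r, t) else none
  | some (r, l), .eta i =>
      match l with
      | [] => some (r ++ [(true, i)], [])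
      | b :: t => if b = true then some (r, t) else none

/-- `red1 w` is the image of a word `w` in the monoid `M₁(M)`. -/
def red1 (M : ℕ) (w : List (Letter1 M)) : El1 M := w.foldl (step1 M) (one1 M)

/-- The code `E` of `X(M)`: words `λ v ρᵢ` or `ξ v ηᵢ` with `red v = 1`. -/
def codeE1 (M : ℕ) (w : List (Letter1 M)) : Prop :=
  ∃ (i : Fin M) (v : List (Letter1 M)),
    (w = Letter1.lam :: (v ++ [Letter1.rho i]) ∨ w = Letter1.xi :: (v ++ [Letter1.eta i]))
      ∧ red1 M v = one1 M

/-- The number of length-`n` code words of `X(M)`. -/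
noncomputable def e1 (M n : ℕ) : ℕ :=
  Nat.card {w : Fin n → Letter1 M // codeE1 M (List.ofFn w)}

/-- The generating function of the code `E` of `X(M)`. -/
noncomputable def fE1 (M : ℕ) : PowerSeries ℚ := PowerSeries.mk fun n => (e1 M n : ℚ)

/-- Membership in the subshift `X(M)`: all finite subwords have nonzero reduction. -/
def inXShift (M : ℕ) (x : ℤ → Letter1 M) : Prop :=
  ∀ (i : ℤ) (m : ℕ), red1 M (List.ofFn fun k : Fin m => x (i + k)) ≠ none

/-- The number of `n`-periodic points of `X(M)`. -/
noncomputable def pX (M n : ℕ) : ℕ :=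
  Nat.card {x : ℤ → Letter1 M // inXShift M x ∧ ∀ k : ℤ, x (k + n) = x k}

/-- Cancel a (reversed) left-letter word against a right-letter word, computing the
multiplier `red(α₋α₊)` of a block with reduction `(r, l)`. -/
def cancel (M : ℕ) : List Bool → List (Bool × Fin M) →
    Option (List Bool × List (Bool × Fin M))
  | [], r => some ([], r)
  | c :: lt, [] => some (c :: lt, [])
  | c :: lt, (b, _) :: rt => if c = b then cancel M lt rt else none

/-- The multiplier of the length-`n` defining block `x₀x₁⋯x_{n−1}` of a periodic
point `x`, as an element of `M₁(M)` given by the remaining (left, right) letters. -/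
def multiplier (M n : ℕ) (x : ℤ → Letter1 M) : Option (List Bool × List (Bool × Fin M)) :=
  match red1 M (List.ofFn fun k : Fin n => x (k : ℤ)) with
  | none => none
  | some (r, l) => cancel M l r

/-- A positive-or-neutral multiplier: no left letters remain after cancellation. -/
def PosMult (M n : ℕ) (x : ℤ → Letter1 M) : Prop :=
  ∃ r', multiplier M n x = some ([], r')

/-- A negative-or-neutral multiplier: no right letters remain after cancellation. -/
def NegMult (M n : ℕ) (x : ℤ → Letter1 M) : Prop :=
  ∃ l', multiplier M n x = some (l', [])

/-- `p_n⁺(X(M))`: the number of `n`-periodic points of `X(M)` whose defining block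
has a positive or neutral multiplier. -/
noncomputable def pXpos (M n : ℕ) : ℕ :=
  Nat.card {x : ℤ → Letter1 M //
    inXShift M x ∧ (∀ k : ℤ, x (k + n) = x k) ∧ PosMult M n x}

/-- `p_n⁻(X(M))`: the number of `n`-periodic points of `X(M)` whose defining block
has a negative or neutral multiplier. -/
noncomputable def pXneg (M n : ℕ) : ℕ :=
  Nat.card {x : ℤ → Letter1 M //
    inXShift M x ∧ (∀ k : ℤ, x (k + n) = x k) ∧ NegMult M n x}

end XShift

/-!
Record a point of `X(M)` by its opening pattern (where the letters `λ, ξ` stand), the types of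
its letters (`λ, ρᵢ` against `ξ, ηᵢ`) and the indices of its closing letters. Reading the pattern
as a bracket word, a finite subword reduces to `0` exactly when it contains a matched pair of
brackets of different types, so the point lies in `X(M)` iff matched positions carry equal types.

For an `n`-periodic pattern with `j` opening positions per period the height drifts by `2j - n`
per period: if `2j ≤ n` every opening position is matched, if `2j ≥ n` every closing one is, and
the matching commutes with the shift by `n`. The admissible types are then free exactly on the
`max j (n - j)` positions of the majority kind, the indices on the `n - j` closing positions, so
`p_n = ∑ⱼ C(n,j) 2^max(j,n-j) M^(n-j)`. Splitting this sum at `j = n/2` and comparing with the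
binomial expansions of `(2M+1)ⁿ` and `(M+2)ⁿ` gives the closed form.
-/

namespace XShift

open Classical in
/-- Functions invariant under an involution `ρ` are determined by their values on a set `F`
meeting every orbit of `ρ` exactly once. -/
noncomputable def invariantFunEquiv {α β : Type*} {ρ : α → α} (hρ : Function.Involutive ρ)
    (F : Set α) (h₁ : ∀ j ∉ F, ρ j ∈ F) (h₂ : ∀ j ∈ F, ρ j ∈ F → ρ j = j) :
    {t : α → β // ∀ j, t (ρ j) = t j} ≃ (F → β) where
  toFun t j := t.1 j
  invFun t' := ⟨fun j => if h : j ∈ F then t' ⟨j, h⟩ else t' ⟨ρ j, h₁ j h⟩, fun j => by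
    by_cases hj : j ∈ F <;> by_cases hρj : ρ j ∈ F
    · simp [hj, h₂ j hj hρj]
    · simp [hj, hρj, hρ j]
    · simp [hj, hρj]
    · exact absurd (h₁ j hj) hρj⟩
  left_inv t := Subtype.ext <| funext fun j => by
    by_cases hj : j ∈ F
    · simp [hj]
    · simp [hj, t.2 j]
  right_inv t' := funext fun j => by simp [j.2]

theorem card_fun_option_none_iff_mem {α β : Type*} [Fintype α] [DecidableEq α] (A : Finset α) :
    Nat.card {o : α → Option β // ∀ j, o j = none ↔ j ∈ A} =
      Nat.card β ^ (Fintype.card α - A.card) := by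
  rw [Nat.card_congr (Equiv.subtypePiEquivPi (β := fun _ => Option β)
    (p := fun j o => o = none ↔ j ∈ A)), Nat.card_pi]
  have : ∀ j, Nat.card {o : Option β // o = none ↔ j ∈ A} = if j ∈ A then 1 else Nat.card β := by
    intro j
    split_ifs with hj
    · simp [hj]
    · simpa [hj] using Nat.card_congr ((Equiv.subtypeEquivRight fun o : Option β =>
        Option.ne_none_iff_isSome).trans (Equiv.optionIsSomeEquiv β))
  simp only [this, Finset.prod_ite, Finset.prod_const_one, Finset.prod_const, one_mul,
    Finset.filter_not, Finset.filter_mem_eq_inter, Finset.univ_inter]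
  rw [← Finset.compl_eq_univ_sdiff, Finset.card_compl]

theorem sum_upper_half_reflect {A : Type*} [AddCommMonoid A] (f : ℕ → A) (n : ℕ) :
    ∑ k ∈ (Finset.range (n + 1)).filter (fun k => ¬2 * k ≤ n), f (n - k) =
      ∑ k ∈ Finset.range ((n + 1) / 2), f k := by
  refine Finset.sum_nbij' (fun k => n - k) (fun k => n - k) ?_ ?_ ?_ ?_ ?_ <;>
    intro k hk <;> simp only [Finset.mem_filter, Finset.mem_range] at hk ⊢ <;> omega

theorem sum_choose_mul_two_pow_max {R : Type*} [CommRing R] (x : R) (n : ℕ) :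
    ∑ k ∈ Finset.range (n + 1), (n.choose k : R) * (2 ^ max k (n - k) * x ^ (n - k)) =
      (2 * x + 1) ^ n + (x + 2) ^ n
        - ∑ k ∈ Finset.range ((n + 1) / 2), (n.choose k : R) * (2 * x) ^ k
        - ∑ k ∈ Finset.range (n / 2 + 1), (n.choose k : R) * 2 ^ k * x ^ (n - k) := by
  have hsplit : ∀ f : ℕ → R, ∑ k ∈ Finset.range (n + 1), f k =
      ∑ k ∈ (Finset.range (n + 1)).filter (fun k => 2 * k ≤ n), f k +
        ∑ k ∈ (Finset.range (n + 1)).filter (fun k => ¬2 * k ≤ n), f k :=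
    fun f => (Finset.sum_filter_add_sum_filter_not _ _ _).symm
  have hlow : (Finset.range (n + 1)).filter (fun k => 2 * k ≤ n) = Finset.range (n / 2 + 1) := by
    ext k
    simp only [Finset.mem_filter, Finset.mem_range]
    omega
  have hhigh : ∑ k ∈ (Finset.range (n + 1)).filter (fun k => ¬2 * k ≤ n),
      (n.choose k : R) * (2 * x) ^ (n - k) =
      ∑ k ∈ Finset.range ((n + 1) / 2), (n.choose k : R) * (2 * x) ^ k := by
    rw [← sum_upper_half_reflect]
    refine Finset.sum_congr rfl fun k hk => ?_
    rw [Nat.choose_symm (by simp at hk; omega)]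
  have hterm : ∀ k, (n.choose k : R) * (2 ^ max k (n - k) * x ^ (n - k)) =
      if 2 * k ≤ n then (n.choose k : R) * (2 * x) ^ (n - k)
      else (n.choose k : R) * 2 ^ k * x ^ (n - k) := by
    intro k
    split_ifs
    · rw [max_eq_right (by omega), mul_pow]
    · rw [max_eq_left (by omega), mul_assoc]
  have h₁ : (2 * x + 1) ^ n = ∑ k ∈ Finset.range (n + 1), (n.choose k : R) * (2 * x) ^ (n - k) := by
    rw [add_comm, add_pow]
    simp [mul_comm]
  have h₂ : (x + 2) ^ n = ∑ k ∈ Finset.range (n + 1), (n.choose k : R) * 2 ^ k * x ^ (n - k) := by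
    rw [add_comm, add_pow]
    exact Finset.sum_congr rfl fun k _ => by ring
  rw [Finset.sum_congr rfl fun k _ => hterm k, Finset.sum_ite, h₁, h₂, hsplit, hsplit, ← hlow,
    hhigh]
  ring

variable {M : ℕ}

namespace Letter1

def isOpen : Letter1 M → Bool
  | lam | xi => true
  | rho _ | eta _ => false

def typ : Letter1 M → Bool
  | lam | rho _ => false
  | xi | eta _ => true

def opening (t : Bool) : Letter1 M := bif t then xi else lam

def closing (t : Bool) (i : Fin M) : Letter1 M := bif t then eta i else rho i

theorem eq_opening_or_closing (a : Letter1 M) :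
    (∃ t, a = opening t) ∨ ∃ t i, a = closing t i := by
  cases a
  exacts [.inl ⟨false, rfl⟩, .inl ⟨true, rfl⟩, .inr ⟨false, _, rfl⟩, .inr ⟨true, _, rfl⟩]

@[simp] theorem isOpen_opening (t : Bool) : (opening t : Letter1 M).isOpen = true := by
  cases t <;> rfl

@[simp] theorem isOpen_closing (t : Bool) (i : Fin M) : (closing t i).isOpen = false := by
  cases t <;> rfl

@[simp] theorem typ_opening (t : Bool) : (opening t : Letter1 M).typ = t := by
  cases t <;> rfl

@[simp] theorem typ_closing (t : Bool) (i : Fin M) : (closing t i).typ = t := by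
  cases t <;> rfl

theorem eq_opening_of_isOpen {a : Letter1 M} (h : a.isOpen = true) : a = opening a.typ := by
  cases a <;> simp_all [isOpen] <;> rfl

theorem eq_closing_of_isOpen {a : Letter1 M} (h : a.isOpen = false) :
    ∃ i, a = closing a.typ i := by
  cases a <;> simp_all [isOpen] <;> exact ⟨_, rfl⟩

/-- A letter is its type together with its index, `none` for the opening letters. -/
def equivBoolOption : Letter1 M ≃ Bool × Option (Fin M) where
  toFun a := (a.typ, match a with | rho i | eta i => some i | _ => none)
  invFun
    | (t, none) => opening t
    | (t, some i) => closing t i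
  left_inv a := by cases a <;> rfl
  right_inv p := by rcases p with ⟨_ | _, _ | _⟩ <;> rfl

instance : Finite (Letter1 M) := .of_equiv _ equivBoolOption.symm

theorem isOpen_eq_true_iff (a : Letter1 M) : a.isOpen = true ↔ (equivBoolOption a).2 = none := by
  cases a <;> simp [isOpen, equivBoolOption]

end Letter1

open Letter1

@[simp] theorem step1_none (a : Letter1 M) : step1 M none a = none := by cases a <;> rfl

@[simp] theorem step1_opening (r : List (Bool × Fin M)) (l : List Bool) (t : Bool) :
    step1 M (some (r, l)) (opening t) = some (r, t :: l) := by
  cases t <;> rfl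

@[simp] theorem step1_closing_nil (r : List (Bool × Fin M)) (t : Bool) (i : Fin M) :
    step1 M (some (r, [])) (closing t i) = some (r ++ [(t, i)], []) := by
  cases t <;> rfl

@[simp] theorem step1_closing_cons (r : List (Bool × Fin M)) (b : Bool) (l : List Bool)
    (t : Bool) (i : Fin M) :
    step1 M (some (r, b :: l)) (closing t i) = if b = t then some (r, l) else none := by
  cases t <;> cases b <;> rfl

theorem red1_append_singleton (w : List (Letter1 M)) (a : Letter1 M) :
    red1 M (w ++ [a]) = step1 M (red1 M w) a := by
  simp [red1]

@[simp] theorem red1_nil : red1 M [] = one1 M := rfl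

@[simp] theorem red1_opening (t : Bool) : red1 M [opening t] = some ([], [t]) := by
  simp [red1, one1]

@[simp] theorem cancel_nil_right (l : List Bool) : cancel M l [] = some (l, []) := by
  cases l <;> rfl

theorem cancel_eq_some {l l' : List Bool} {r r' : List (Bool × Fin M)}
    (h : cancel M l r = some (l', r')) : l' = [] ∨ r' = [] := by
  induction l generalizing r with
  | nil => simp_all [cancel]
  | cons c l ih =>
    rcases r with _ | ⟨⟨b, i⟩, r⟩
    · simp_all [cancel]
    · simp only [cancel] at h
      split_ifs at h
      exact ih h

theorem cancel_append_singleton (l : List Bool) (r : List (Bool × Fin M)) (x : Bool × Fin M) :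
    cancel M l (r ++ [x]) =
      match cancel M l r with
      | none => none
      | some ([], r') => some ([], r' ++ [x])
      | some (b :: l', _) => if b = x.1 then some (l', []) else none := by
  induction l generalizing r with
  | nil => simp [cancel]
  | cons c l ih =>
    rcases r with _ | ⟨⟨b, i⟩, r⟩
    · by_cases hc : c = x.1 <;> simp [cancel, hc]
    · by_cases hcb : c = b <;> simp [cancel, hcb, ih]

/-- The product of `M₁(M)`: the left letters of `x` cancel against the right letters of `y`. -/
def mul1 : El1 M → El1 M → El1 M
  | some (r₁, l₁), some (r₂, l₂) => (cancel M l₁ r₂).map fun p => (r₁ ++ p.2, l₂ ++ p.1)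
  | _, _ => none

@[simp] theorem mul1_none_left (y : El1 M) : mul1 none y = none := rfl

@[simp] theorem mul1_none_right (x : El1 M) : mul1 x none = none := by
  rcases x with _ | ⟨_, _⟩ <;> rfl

@[simp] theorem mul1_one1_right (x : El1 M) : mul1 x (one1 M) = x := by
  rcases x with _ | ⟨_, _⟩ <;> simp [mul1, one1]

theorem step1_mul1 (x y : El1 M) (a : Letter1 M) :
    step1 M (mul1 x y) a = mul1 x (step1 M y a) := by
  rcases x with _ | ⟨r₁, l₁⟩
  · simp
  rcases y with _ | ⟨r₂, l₂⟩
  · simp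
  rcases eq_opening_or_closing a with ⟨t, rfl⟩ | ⟨t, i, rfl⟩
  · cases h : cancel M l₁ r₂ <;> simp [mul1, h]
  cases l₂ with
  | cons b l₂ => by_cases hb : b = t <;> cases h : cancel M l₁ r₂ <;> simp [mul1, h, hb]
  | nil =>
    simp only [mul1, step1_closing_nil, cancel_append_singleton]
    rcases h : cancel M l₁ r₂ with _ | ⟨_ | ⟨b, l'⟩, r'⟩
    · simp
    · simp
    · obtain rfl : r' = [] := (cancel_eq_some h).resolve_left (by simp)
      by_cases hb : b = t <;> simp [hb]

theorem foldl_step1 (x : El1 M) (v : List (Letter1 M)) :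
    v.foldl (step1 M) x = mul1 x (red1 M v) := by
  induction v using List.reverseRecOn with
  | nil => simp
  | append_singleton v a ih =>
    rw [List.foldl_append, red1_append_singleton, ← step1_mul1, ← ih]
    rfl

theorem red1_append (u v : List (Letter1 M)) :
    red1 M (u ++ v) = mul1 (red1 M u) (red1 M v) := by
  rw [red1, List.foldl_append, ← red1, foldl_step1]

theorem red1_opening_cons_closing {v : List (Letter1 M)} (hv : red1 M v = one1 M)
    (t t' : Bool) (i : Fin M) :
    red1 M (opening t :: (v ++ [closing t' i])) = if t = t' then one1 M else none := by
  rw [← List.cons_append, red1_append_singleton, ← List.singleton_append, red1_append, hv]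
  simp [one1, mul1, cancel]

theorem exists_opening_of_red1_eq_some {w : List (Letter1 M)} {r : List (Bool × Fin M)}
    {b : Bool} {l : List Bool} (h : red1 M w = some (r, b :: l)) :
    ∃ u v, w = u ++ opening b :: v ∧ red1 M v = one1 M ∧ red1 M u = some (r, l) := by
  induction hn : w.length using Nat.strong_induction_on generalizing w r b l with
  | _ n ih =>
  subst hn
  rcases w.eq_nil_or_concat with rfl | ⟨w, a, rfl⟩
  · simp [one1] at h
  rw [List.concat_eq_append, red1_append_singleton] at h
  rcases hw : red1 M w with _ | ⟨r₀, l₀⟩ <;> rw [hw] at h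
  · simp at h
  rcases eq_opening_or_closing a with ⟨t, rfl⟩ | ⟨t, i, rfl⟩
  · obtain ⟨rfl, rfl, rfl⟩ : r₀ = r ∧ t = b ∧ l₀ = l := by simpa using h
    exact ⟨w, [], by simp, rfl, hw⟩
  rcases l₀ with _ | ⟨c, l₀⟩
  · simp at h
  by_cases hc : c = t
  · obtain ⟨rfl, rfl⟩ : r₀ = r ∧ l₀ = b :: l := by simpa [hc] using h
    -- `a` closes the bracket opened at the top `t` of the stack of `w`; `b` lies just below it
    obtain ⟨u₁, v₁, rfl, hv₁, hu₁⟩ := ih _ (by simp) (hc ▸ hw) rfl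
    obtain ⟨u₂, v₂, rfl, hv₂, hu₂⟩ := ih _ (by simp) hu₁ rfl
    refine ⟨u₂, v₂ ++ opening t :: (v₁ ++ [closing t i]), by simp, ?_, hu₂⟩
    rw [red1_append, hv₂, red1_opening_cons_closing hv₁]
    simp
  · simp [hc] at h

def wordHeight (w : List (Letter1 M)) : ℤ := (w.map fun a => if a.isOpen then 1 else -1).sum

@[simp] theorem wordHeight_nil : wordHeight ([] : List (Letter1 M)) = 0 := rfl

theorem wordHeight_append_singleton (w : List (Letter1 M)) (a : Letter1 M) :
    wordHeight (w ++ [a]) = wordHeight w + if a.isOpen then 1 else -1 := by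
  simp [wordHeight]

def Balanced (w : List (Letter1 M)) : Prop :=
  wordHeight w = 0 ∧ ∀ v, v <+: w → 0 ≤ wordHeight v

theorem wordHeight_of_red1_eq_some {w : List (Letter1 M)} {r : List (Bool × Fin M)}
    {l : List Bool} (h : red1 M w = some (r, l)) :
    wordHeight w = l.length - r.length ∧ (∀ v, v <+: w → -(r.length : ℤ) ≤ wordHeight v) ∧
      ∃ v, v <+: w ∧ wordHeight v = -r.length := by
  induction w using List.reverseRecOn generalizing r l with
  | nil =>
    obtain ⟨rfl, rfl⟩ : [] = r ∧ [] = l := by simpa [one1] using h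
    exact ⟨rfl, by simp, [], List.prefix_refl _, rfl⟩
  | append_singleton u a ih =>
    rw [red1_append_singleton] at h
    rcases hu : red1 M u with _ | ⟨r₀, l₀⟩ <;> rw [hu] at h
    · simp at h
    obtain ⟨hw, hmin, v₀, hv₀, hv₀h⟩ := ih hu
    have hstep : r = r₀ ∧ wordHeight (u ++ [a]) = l.length - r.length ∨
        r.length = r₀.length + 1 ∧ l = [] ∧ wordHeight (u ++ [a]) = -r.length := by
      rw [wordHeight_append_singleton, hw]
      rcases eq_opening_or_closing a with ⟨t, rfl⟩ | ⟨t, i, rfl⟩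
      · obtain ⟨rfl, rfl⟩ : r₀ = r ∧ t :: l₀ = l := by simpa using h
        exact .inl ⟨rfl, by simp; ring⟩
      rcases l₀ with _ | ⟨c, l₀⟩
      · obtain ⟨rfl, rfl⟩ : r₀ ++ [(t, i)] = r ∧ [] = l := by simpa using h
        exact .inr ⟨by simp, rfl, by simp; ring⟩
      by_cases hc : c = t
      · obtain ⟨rfl, rfl⟩ : r₀ = r ∧ l₀ = l := by simpa [hc] using h
        exact .inl ⟨rfl, by simp; ring⟩
      · simp [hc] at h
    simp only [List.prefix_concat_iff]
    rcases hstep with ⟨rfl, hfull⟩ | ⟨hlen, rfl, hfull⟩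
    · refine ⟨hfull, ?_, v₀, .inr hv₀, hv₀h⟩
      rintro v (rfl | hv)
      · omega
      · exact hmin v hv
    · refine ⟨by simpa using hfull, ?_, u ++ [a], .inl rfl, hfull⟩
      rintro v (rfl | hv)
      · exact hfull.ge
      · have := hmin v hv
        omega

theorem red1_eq_one1_iff {w : List (Letter1 M)} :
    red1 M w = one1 M ↔ red1 M w ≠ none ∧ Balanced w := by
  constructor
  · intro h
    obtain ⟨hw, hmin, -⟩ := wordHeight_of_red1_eq_some h
    exact ⟨by simp [h, one1], by simpa using hw, by simpa using hmin⟩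
  · rintro ⟨hne, hw, hpre⟩
    obtain ⟨⟨r, l⟩, h⟩ := Option.ne_none_iff_exists'.mp hne
    obtain ⟨hw', -, v, hv, hvh⟩ := wordHeight_of_red1_eq_some h
    have := hpre v hv
    have hr : r = [] := List.eq_nil_of_length_eq_zero (by omega)
    have hl : l = [] := List.eq_nil_of_length_eq_zero (by omega)
    simp [h, hr, hl, one1]

section Height

variable (b : ℤ → Bool)

/-- Up by one at each `true`, down by one at each `false`, normalised by `height b 0 = 0`. -/
def height : ℤ → ℤ
  | .ofNat m => ∑ k ∈ Finset.range m, if b k then 1 else -1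
  | .negSucc m => -∑ k ∈ Finset.range (m + 1), if b (-(k + 1 : ℤ)) then 1 else -1

@[simp] theorem height_zero : height b 0 = 0 := rfl

theorem height_succ (k : ℤ) : height b (k + 1) = height b k + if b k then 1 else -1 := by
  rcases k with m | m
  · exact Finset.sum_range_succ _ m
  rcases m with _ | m
  · simp [height]
  · rw [show Int.negSucc (m + 1) + 1 = Int.negSucc m by omega]
    simp only [height, Finset.sum_range_succ (n := m + 1)]
    rw [show -((m + 1 : ℕ) + 1 : ℤ) = Int.negSucc (m + 1) by omega]
    ring

theorem height_succ_eq_or (k : ℤ) :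
    height b (k + 1) = height b k + 1 ∨ height b (k + 1) = height b k - 1 := by
  rw [height_succ]
  cases b k
  · exact .inr (by simp; ring)
  · exact .inl (by simp)

theorem height_add_of_periodic {c : ℤ} (hb : Function.Periodic b c) (k : ℤ) :
    height b (k + c) = height b k + height b c := by
  induction k using Int.induction_on with
  | zero => simp
  | succ k ih => rw [add_right_comm, height_succ, height_succ, ih, hb]; ring
  | pred k ih =>
    have h₁ := height_succ b (-k - 1 + c)
    have h₂ := height_succ b (-k - 1)
    rw [show -(k : ℤ) - 1 + c + 1 = -k + c by ring, hb, ih] at h₁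
    rw [sub_add_cancel] at h₂
    linarith

/-- The opening position `p` is matched with the closing position `q`: the height first returns
to its value at `p` right after `q`. -/
def IsMatch (p q : ℤ) : Prop :=
  p < q ∧ height b (q + 1) = height b p ∧ ∀ j, p < j → j ≤ q → height b p < height b j

variable {b}

theorem IsMatch.left_eq_true {p q : ℤ} (h : IsMatch b p q) : b p = true := by
  obtain ⟨hpq, -, hmin⟩ := h
  have := hmin (p + 1) (by omega) (by omega)
  rw [height_succ] at this
  by_contra hp
  simp [hp] at this

theorem IsMatch.right_eq_false {p q : ℤ} (h : IsMatch b p q) : b q = false := by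
  obtain ⟨hpq, hq, hmin⟩ := h
  have := hmin q hpq le_rfl
  have hsucc := height_succ b q
  rw [hq] at hsucc
  cases hbq : b q
  · rfl
  · simp [hbq] at hsucc
    linarith

theorem IsMatch.right_unique {p q q' : ℤ} (h : IsMatch b p q) (h' : IsMatch b p q') :
    q = q' := by
  obtain ⟨hpq, hq, hmin⟩ := h
  obtain ⟨hpq', hq', hmin'⟩ := h'
  by_contra hne
  rcases lt_or_gt_of_ne hne with hlt | hlt
  · have := hmin' (q + 1) (by omega) (by omega); omega
  · have := hmin (q' + 1) (by omega) (by omega); omega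

theorem IsMatch.left_unique {p p' q : ℤ} (h : IsMatch b p q) (h' : IsMatch b p' q) :
    p = p' := by
  obtain ⟨hpq, hq, hmin⟩ := h
  obtain ⟨hpq', hq', hmin'⟩ := h'
  by_contra hne
  rcases lt_or_gt_of_ne hne with hlt | hlt
  · have := hmin p' hlt (by omega); omega
  · have := hmin' p hlt (by omega); omega

theorem isMatch_add_period_iff {c : ℤ} (hb : Function.Periodic b c) {p q : ℤ} :
    IsMatch b (p + c) (q + c) ↔ IsMatch b p q := by
  have hH := height_add_of_periodic b hb
  simp only [IsMatch, add_right_comm q c 1, hH]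
  refine and_congr (by omega) (and_congr (by omega) ⟨fun h j hpj hjq => ?_, fun h j hpj hjq => ?_⟩)
  · have := h (j + c) (by omega) (by omega); rw [hH] at this; linarith
  · have := h (j - c) (by omega) (by omega)
    have e := hH (j - c)
    rw [sub_add_cancel] at e
    linarith

theorem exists_isMatch_right {c : ℤ} (hb : Function.Periodic b c) (hc : 0 < c)
    (hD : height b c ≤ 0) {p : ℤ} (hp : b p = true) : ∃ q, IsMatch b p q := by
  classical
  have hex : ∃ m : ℕ, height b (p + 1 + m) ≤ height b p :=
    ⟨(c - 1).toNat, by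
      rw [show p + 1 + ((c - 1).toNat : ℤ) = p + c by omega, height_add_of_periodic b hb]
      linarith⟩
  have hm := Nat.find_spec hex
  have hlt : ∀ k < Nat.find hex, height b p < height b (p + 1 + k) :=
    fun k hk => not_le.mp (Nat.find_min hex hk)
  have hup : height b (p + 1) = height b p + 1 := by simp [height_succ, hp]
  have hpos : 0 < Nat.find hex := (Nat.find_pos hex).mpr (by simp [hup])
  have hprev := hlt (Nat.find hex - 1) (by omega)
  rw [show p + 1 + ((Nat.find hex - 1 : ℕ) : ℤ) = p + Nat.find hex by omega] at hprev
  refine ⟨p + Nat.find hex, by omega, ?_, fun j hpj hjq => ?_⟩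
  · rw [add_right_comm] at hm
    rcases height_succ_eq_or b (p + Nat.find hex) with h | h <;> omega
  · have := hlt (j - p - 1).toNat (by omega)
    rwa [show p + 1 + ((j - p - 1).toNat : ℤ) = j by omega] at this

theorem exists_isMatch_left {c : ℤ} (hb : Function.Periodic b c) (hc : 0 < c)
    (hD : 0 ≤ height b c) {q : ℤ} (hq : b q = false) : ∃ p, IsMatch b p q := by
  classical
  have hex : ∃ m : ℕ, height b (q - m) ≤ height b (q + 1) :=
    ⟨(c - 1).toNat, by
      have := height_add_of_periodic b hb (q + 1 - c)
      rw [sub_add_cancel] at this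
      rw [show q - ((c - 1).toNat : ℤ) = q + 1 - c by omega]
      linarith⟩
  have hm := Nat.find_spec hex
  have hlt : ∀ k < Nat.find hex, height b (q + 1) < height b (q - k) :=
    fun k hk => not_le.mp (Nat.find_min hex hk)
  have hdown : height b (q + 1) = height b q - 1 := by simp [height_succ, hq]; ring
  have hpos : 0 < Nat.find hex := (Nat.find_pos hex).mpr (by simp [hdown])
  have hprev := hlt (Nat.find hex - 1) (by omega)
  rw [show q - ((Nat.find hex - 1 : ℕ) : ℤ) = q - Nat.find hex + 1 by omega] at hprev
  refine ⟨q - Nat.find hex, by omega, ?_, fun j hpj hjq => ?_⟩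
  · rcases height_succ_eq_or b (q - Nat.find hex) with h | h <;> omega
  · have := hlt (q - j).toNat (by omega)
    rw [show q - ((q - j).toNat : ℤ) = j by omega] at this
    omega

variable (b) in
open Classical in
/-- The position matched with `p`, or `p` itself if `p` is unmatched. -/
noncomputable def partner (p : ℤ) : ℤ :=
  if h : ∃ q, IsMatch b p q ∨ IsMatch b q p then h.choose else p

theorem eq_of_isMatch_or {p q q' : ℤ} (h : IsMatch b p q ∨ IsMatch b q p)
    (h' : IsMatch b p q' ∨ IsMatch b q' p) : q = q' := by
  rcases h with h | h <;> rcases h' with h' | h'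
  · exact h.right_unique h'
  · exact absurd h'.right_eq_false (by simp [h.left_eq_true])
  · exact absurd h.right_eq_false (by simp [h'.left_eq_true])
  · exact h.left_unique h'

theorem partner_eq_of_isMatch_or {p q : ℤ} (h : IsMatch b p q ∨ IsMatch b q p) :
    partner b p = q := by
  have hex : ∃ q, IsMatch b p q ∨ IsMatch b q p := ⟨q, h⟩
  rw [partner, dif_pos hex]
  exact eq_of_isMatch_or hex.choose_spec h

theorem IsMatch.partner_left {p q : ℤ} (h : IsMatch b p q) : partner b p = q :=
  partner_eq_of_isMatch_or (.inl h)

theorem IsMatch.partner_right {p q : ℤ} (h : IsMatch b p q) : partner b q = p :=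
  partner_eq_of_isMatch_or (.inr h)

theorem partner_eq_self_iff {p : ℤ} :
    partner b p = p ↔ ∀ q, ¬IsMatch b p q ∧ ¬IsMatch b q p := by
  refine ⟨fun h q => ⟨fun h' => ?_, fun h' => ?_⟩, fun h => ?_⟩
  · exact h'.1.ne (h ▸ h'.partner_left)
  · exact h'.1.ne (h ▸ h'.partner_right).symm
  · rw [partner, dif_neg]
    simpa only [not_exists, not_or] using h

theorem isMatch_partner {p : ℤ} (h : partner b p ≠ p) :
    IsMatch b p (partner b p) ∨ IsMatch b (partner b p) p := by
  unfold partner at h ⊢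
  split_ifs at h ⊢ with hex
  · exact hex.choose_spec
  · exact absurd rfl h

theorem partner_partner (p : ℤ) : partner b (partner b p) = p := by
  by_cases h : partner b p = p
  · rw [h, h]
  · rcases isMatch_partner h with h' | h'
    · exact h'.partner_right
    · exact h'.partner_left

theorem apply_partner {p : ℤ} (h : partner b p ≠ p) : b (partner b p) = !b p := by
  rcases isMatch_partner h with h' | h' <;> simp [h'.left_eq_true, h'.right_eq_false]

theorem partner_add_of_periodic {c : ℤ} (hb : Function.Periodic b c) (p : ℤ) :
    partner b (p + c) = partner b p + c := by
  by_cases h : partner b p = p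
  · rw [h, partner_eq_self_iff]
    intro q
    rw [← sub_add_cancel q c, isMatch_add_period_iff hb, isMatch_add_period_iff hb]
    exact partner_eq_self_iff.mp h (q - c)
  · rcases isMatch_partner h with h' | h'
    · exact ((isMatch_add_period_iff hb).mpr h').partner_left
    · exact ((isMatch_add_period_iff hb).mpr h').partner_right

theorem partner_ne_self {c : ℤ} (hb : Function.Periodic b c) (hc : 0 < c) {p : ℤ}
    (h : b p = true ∧ height b c ≤ 0 ∨ b p = false ∧ 0 ≤ height b c) : partner b p ≠ p := by
  rcases h with ⟨hp, hD⟩ | ⟨hp, hD⟩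
  · obtain ⟨q, hq⟩ := exists_isMatch_right hb hc hD hp
    rw [hq.partner_left]
    exact hq.1.ne'
  · obtain ⟨q, hq⟩ := exists_isMatch_left hb hc hD hp
    rw [hq.partner_right]
    exact hq.1.ne

end Height

section Window

variable {α : Type*} (s : ℤ → α)

def window (i : ℤ) (m : ℕ) : List α := List.ofFn fun k : Fin m => s (i + k)

@[simp] theorem length_window (i : ℤ) (m : ℕ) : (window s i m).length = m := by
  simp [window]

theorem window_add (i : ℤ) (m m' : ℕ) :
    window s i (m + m') = window s i m ++ window s (i + m) m' := by
  simp [window, List.ofFn_add, add_assoc]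

theorem window_succ (i : ℤ) (m : ℕ) : window s i (m + 1) = window s i m ++ [s (i + m)] := by
  rw [window_add]
  simp [window]

theorem window_succ' (i : ℤ) (m : ℕ) : window s i (m + 1) = s i :: window s (i + 1) m := by
  rw [add_comm, window_add]
  simp [window]

theorem prefix_window_iff {v : List α} {i : ℤ} {m : ℕ} :
    v <+: window s i m ↔ ∃ k ≤ m, v = window s i k := by
  refine ⟨fun h => ⟨v.length, by simpa using h.length_le, ?_⟩, ?_⟩
  · obtain ⟨z, hz⟩ := h
    have := congrArg List.length hz
    simp only [List.length_append, length_window] at this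
    rw [← Nat.add_sub_cancel' (show v.length ≤ m by omega), window_add] at hz
    exact (List.append_inj hz (by simp)).1
  · rintro ⟨k, hk, rfl⟩
    rw [← Nat.add_sub_cancel' hk, window_add]
    exact List.prefix_append _ _

theorem window_eq_append_cons {i : ℤ} {m : ℕ} {u v : List α} {a : α}
    (h : window s i m = u ++ a :: v) :
    a = s (i + u.length) ∧ v = window s (i + u.length + 1) v.length := by
  have hm : m = u.length + (v.length + 1) := by simpa using congrArg List.length h
  rw [hm, window_add, window_succ'] at h
  simpa [eq_comm] using (List.append_inj h (by simp)).2

end Window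

section Characterization

def openPattern (s : ℤ → Letter1 M) (k : ℤ) : Bool := (s k).isOpen

theorem wordHeight_window (s : ℤ → Letter1 M) (i : ℤ) (m : ℕ) :
    wordHeight (window s i m) = height (openPattern s) (i + m) - height (openPattern s) i := by
  induction m with
  | zero => simp [window]
  | succ m ih =>
    rw [window_succ, wordHeight_append_singleton, ih, Nat.cast_succ, ← add_assoc, height_succ,
      sub_add_eq_add_sub]
    rfl

theorem isMatch_iff_balanced_window (s : ℤ → Letter1 M) (p : ℤ) (m : ℕ) :
    IsMatch (openPattern s) p (p + 1 + m) ↔ (s p).isOpen = true ∧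
      (s (p + 1 + m)).isOpen = false ∧ Balanced (window s (p + 1) m) := by
  have hup := height_succ (openPattern s) p
  have hdown := height_succ (openPattern s) (p + 1 + m)
  constructor
  · intro h
    have hp := h.left_eq_true
    have hq := h.right_eq_false
    obtain ⟨-, hend, hmin⟩ := h
    simp [hp, hq] at hup hdown
    refine ⟨hp, hq, ?_, fun v hv => ?_⟩
    · rw [wordHeight_window]
      omega
    · obtain ⟨k, hk, rfl⟩ := (prefix_window_iff s).mp hv
      rw [wordHeight_window]
      have := hmin (p + 1 + k) (by omega) (by omega)
      omega
  · rintro ⟨hp, hq, hbal, hpre⟩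
    simp [openPattern, hp, hq] at hup hdown
    rw [wordHeight_window] at hbal
    refine ⟨by omega, by omega, fun j hpj hjq => ?_⟩
    have := hpre _ ((prefix_window_iff s).mpr ⟨(j - p - 1).toNat, by omega, rfl⟩)
    rw [wordHeight_window, show p + 1 + ((j - p - 1).toNat : ℤ) = j by omega] at this
    omega

variable (s : ℤ → Letter1 M)

theorem typ_eq_of_isMatch (hs : inXShift M s) {p q : ℤ} (h : IsMatch (openPattern s) p q) :
    (s p).typ = (s q).typ := by
  obtain ⟨m, rfl⟩ : ∃ m : ℕ, q = p + 1 + m := ⟨(q - p - 1).toNat, by have := h.1; omega⟩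
  obtain ⟨hp, hq, hbal⟩ := (isMatch_iff_balanced_window s p m).mp h
  have hv : red1 M (window s (p + 1) m) = one1 M := red1_eq_one1_iff.mpr ⟨hs _ _, hbal⟩
  obtain ⟨i, hi⟩ := eq_closing_of_isOpen hq
  have hw : red1 M (window s p (m + 2)) ≠ none := hs p (m + 2)
  rw [window_succ, window_succ', eq_opening_of_isOpen hp, show p + ((m + 1 : ℕ) : ℤ) = p + 1 + m by
    push_cast; ring, hi, List.cons_append, red1_opening_cons_closing hv] at hw
  simpa [one1] using hw

theorem inXShift_of_isMatch (h : ∀ p q, IsMatch (openPattern s) p q → (s p).typ = (s q).typ) :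
    inXShift M s := by
  intro i m
  change red1 M (window s i m) ≠ none
  induction m with
  | zero => simp [window, one1]
  | succ m ih =>
    rw [window_succ, red1_append_singleton]
    obtain ⟨⟨r, l⟩, hr⟩ := Option.ne_none_iff_exists'.mp ih
    rw [hr]
    rcases eq_opening_or_closing (s (i + m)) with ⟨t, ht⟩ | ⟨t, j, ht⟩
    · simp [ht]
    rcases l with _ | ⟨c, l⟩
    · simp [ht]
    -- the top `c` of the stack comes from the opening letter matched with position `i + m`
    obtain ⟨u, v, huv, hv, -⟩ := exists_opening_of_red1_eq_some hr
    obtain ⟨hsp, hvw⟩ := window_eq_append_cons s huv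
    have hm : (m : ℤ) = u.length + 1 + v.length := by
      have := congrArg List.length huv
      simp at this
      omega
    have hmatch : IsMatch (openPattern s) (i + u.length) (i + m) := by
      rw [hm, ← add_assoc, ← add_assoc, isMatch_iff_balanced_window]
      refine ⟨by simp [← hsp], ?_, hvw ▸ (red1_eq_one1_iff.mp hv).2⟩
      rw [show i + u.length + 1 + v.length = i + m by omega, ht]
      simp
    have := h _ _ hmatch
    rw [← hsp, ht, typ_opening, typ_closing] at this
    simp [ht, this]

theorem inXShift_iff_typ_partner :
    inXShift M s ↔ ∀ p, (s (partner (openPattern s) p)).typ = (s p).typ := by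
  refine ⟨fun hs p => ?_, fun h => inXShift_of_isMatch s fun p q hpq => ?_⟩
  · by_cases hp : partner (openPattern s) p = p
    · rw [hp]
    · rcases isMatch_partner hp with h' | h'
      · exact (typ_eq_of_isMatch s hs h').symm
      · exact typ_eq_of_isMatch s hs h'
  · rw [← hpq.partner_left]
    exact (h p).symm

end Characterization

section Periodic

variable {n : ℕ}

theorem apply_cast_intCast {α : Type*} {x : ℤ → α} (hx : Function.Periodic x n) (k : ℤ) :
    x (k : ZMod n).cast = x k := by
  rw [ZMod.coe_intCast, Int.emod_def]
  simpa [mul_comm] using (hx.int_mul (k / n)).sub_eq k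

theorem pX_eq_card_zmod :
    pX M n = Nat.card {w : ZMod n → Letter1 M // inXShift M fun k => w k} :=
  Nat.card_congr
    { toFun := fun x => ⟨fun j => x.1 j.cast, by
        convert x.2.1 using 1
        exact funext (apply_cast_intCast x.2.2)⟩
      invFun := fun w => ⟨fun k => w.1 k, w.2, fun k => by simp⟩
      left_inv := fun x => Subtype.ext (funext (apply_cast_intCast x.2.2))
      right_inv := fun w => Subtype.ext (funext fun j => by simp) }

variable (A : Finset (ZMod n))

def memPattern (k : ℤ) : Bool := decide ((k : ZMod n) ∈ A)

theorem periodic_memPattern : Function.Periodic (memPattern A) n := fun k => by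
  simp [memPattern]

@[simp] theorem memPattern_cast (j : ZMod n) : memPattern A j.cast = decide (j ∈ A) := by
  simp [memPattern]

noncomputable def matchPartner (j : ZMod n) : ZMod n := (partner (memPattern A) j.cast : ZMod n)

theorem intCast_partner (p : ℤ) : (partner (memPattern A) p : ZMod n) = matchPartner A p := by
  have key := partner_add_of_periodic ((periodic_memPattern A).int_mul (-(p / n))) p
  simp only [Int.cast_id] at key
  rw [matchPartner, ZMod.coe_intCast, Int.emod_def,
    show p - n * (p / n) = p + -(p / n) * n by ring, key]
  simp

theorem matchPartner_involutive : Function.Involutive (matchPartner A) := fun j => by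
  change matchPartner A (partner (memPattern A) j.cast : ZMod n) = j
  rw [← intCast_partner, partner_partner]
  simp

theorem mem_matchPartner_iff {j : ZMod n} (h : partner (memPattern A) j.cast ≠ j.cast) :
    matchPartner A j ∈ A ↔ j ∉ A := by
  have := apply_partner h
  rw [memPattern, memPattern_cast, ← decide_not, decide_eq_decide] at this
  exact this

variable [NeZero n]

theorem height_memPattern : height (memPattern A) n = 2 * A.card - n := by
  change (∑ k ∈ Finset.range n, if memPattern A k then 1 else -1) = _
  have hsum : ∑ k ∈ Finset.range n, (if memPattern A k then (1 : ℤ) else -1) =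
      ∑ j : ZMod n, if j ∈ A then 1 else -1 :=
    Finset.sum_nbij' (fun k => (k : ZMod n)) ZMod.val (by simp)
      (fun j _ => by simpa using ZMod.val_lt j)
      (fun k hk => ZMod.val_cast_of_lt (by simpa using hk)) (fun j _ => by simp)
      (fun k _ => by simp [memPattern])
  rw [hsum, Finset.sum_ite, Finset.filter_not, Finset.filter_mem_eq_inter, Finset.univ_inter,
    ← Finset.compl_eq_univ_sdiff]
  have := A.card_le_univ
  simp [Finset.card_compl] at this ⊢
  omega

theorem partner_cast_ne_self {j : ZMod n}
    (h : j ∈ A ∧ 2 * A.card ≤ n ∨ j ∉ A ∧ n ≤ 2 * A.card) :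
    partner (memPattern A) j.cast ≠ j.cast := by
  refine partner_ne_self (periodic_memPattern A) (by simpa using NeZero.pos n) ?_
  rw [height_memPattern, memPattern_cast]
  rcases h with ⟨hj, hA⟩ | ⟨hj, hA⟩
  · exact .inl ⟨by simpa using hj, by omega⟩
  · exact .inr ⟨by simpa using hj, by omega⟩

theorem card_matchPartner_invariant :
    Nat.card {t : ZMod n → Bool // ∀ j, t (matchPartner A j) = t j} =
      2 ^ max A.card (n - A.card) := by
  -- the free positions: the closing ones if the drift is non-positive, else the opening ones
  let F : Set (ZMod n) := {j | j ∈ A ↔ n < 2 * A.card}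
  have h₁ : ∀ j ∉ F, matchPartner A j ∈ F := by
    intro j hj
    have hne := partner_cast_ne_self A (j := j) (by
      by_cases hjA : j ∈ A <;> simp [F, hjA] at hj ⊢ <;> omega)
    simp only [F, Set.mem_ofPred_eq, mem_matchPartner_iff A hne] at hj ⊢
    tauto
  have h₂ : ∀ j ∈ F, matchPartner A j ∈ F → matchPartner A j = j := by
    intro j hj hρj
    by_contra hne
    have := mem_matchPartner_iff A fun h : partner _ j.cast = j.cast =>
      hne (by simp [matchPartner, h])
    simp only [F, Set.mem_ofPred_eq, this] at hj hρj
    tauto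
  rw [Nat.card_congr (invariantFunEquiv (matchPartner_involutive A) F h₁ h₂), Nat.card_fun,
    Nat.card_eq_fintype_card, Fintype.card_bool]
  have hAn : A.card ≤ n := by simpa [ZMod.card] using A.card_le_univ
  by_cases hA : n < 2 * A.card
  · have hF : F = A := by ext; simp [F, hA]
    rw [hF, Nat.card_coe_set_eq, Set.ncard_coe_finset, max_eq_left (by omega)]
  · have hF : F = ↑Aᶜ := by ext; simp [F, hA]
    rw [hF, Nat.card_coe_set_eq, Set.ncard_coe_finset, Finset.card_compl, ZMod.card,
      max_eq_right (by omega)]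

end Periodic

section Counting

variable {n : ℕ} [NeZero n]

theorem inXShift_iff_of_pattern (A : Finset (ZMod n)) {w : ZMod n → Letter1 M}
    (hw : Finset.univ.filter (fun j => (w j).isOpen) = A) :
    (inXShift M fun k => w k) ↔ ∀ j, (w (matchPartner A j)).typ = (w j).typ := by
  have hpat : openPattern (fun k : ℤ => w k) = memPattern A := funext fun k => by
    simp [openPattern, memPattern, ← hw]
  rw [inXShift_iff_typ_partner, hpat]
  refine ⟨fun h j => by simpa [matchPartner] using h j.cast, fun h p => ?_⟩
  rw [intCast_partner]
  exact h p

theorem card_admissible_of_pattern (A : Finset (ZMod n)) :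
    Nat.card {w : ZMod n → Letter1 M //
        (inXShift M fun k => w k) ∧ Finset.univ.filter (fun j => (w j).isOpen) = A} =
      2 ^ max A.card (n - A.card) * M ^ (n - A.card) := by
  let e : (ZMod n → Letter1 M) ≃ (ZMod n → Bool) × (ZMod n → Option (Fin M)) :=
    (Equiv.arrowCongr (.refl _) equivBoolOption).trans (Equiv.arrowProdEquivProdArrow _ _ _)
  have key : ∀ w : ZMod n → Letter1 M,
      ((inXShift M fun k => w k) ∧ Finset.univ.filter (fun j => (w j).isOpen) = A) ↔
        (∀ j, (e w).1 (matchPartner A j) = (e w).1 j) ∧ ∀ j, (e w).2 j = none ↔ j ∈ A := by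
    intro w
    have hpat : Finset.univ.filter (fun j => (w j).isOpen) = A ↔ ∀ j, (e w).2 j = none ↔ j ∈ A := by
      simp [e, Finset.ext_iff, isOpen_eq_true_iff]
    exact ⟨fun ⟨hX, hw⟩ => ⟨(inXShift_iff_of_pattern A hw).mp hX, hpat.mp hw⟩,
      fun ⟨ht, ho⟩ => ⟨(inXShift_iff_of_pattern A (hpat.mpr ho)).mpr ht, hpat.mpr ho⟩⟩
  rw [Nat.card_congr ((e.subtypeEquiv key).trans (Equiv.subtypeProdEquivProd
      (p := fun t => ∀ j, t (matchPartner A j) = t j) (q := fun o => ∀ j, o j = none ↔ j ∈ A))),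
    Nat.card_prod, card_matchPartner_invariant, card_fun_option_none_iff_mem, Nat.card_eq_fintype_card,
    Fintype.card_fin, ZMod.card]

theorem pX_eq_sum :
    pX M n = ∑ k ∈ Finset.range (n + 1), n.choose k * (2 ^ max k (n - k) * M ^ (n - k)) := by
  let pattern : {w : ZMod n → Letter1 M // inXShift M fun k => w k} → Finset (ZMod n) :=
    fun w => Finset.univ.filter fun j => (w.1 j).isOpen
  rw [pX_eq_card_zmod, Nat.card_congr (Equiv.sigmaFiberEquiv pattern).symm, Nat.card_sigma]
  have hfiber : ∀ A, Nat.card {w // pattern w = A} =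
      2 ^ max A.card (n - A.card) * M ^ (n - A.card) := fun A => by
    rw [← card_admissible_of_pattern A]
    exact Nat.card_congr (Equiv.subtypeSubtypeEquivSubtypeInter
      (fun w : ZMod n → Letter1 M => inXShift M fun k => w k)
      fun w => Finset.univ.filter (fun j => (w j).isOpen) = A)
  simp only [hfiber]
  rw [← Finset.powerset_univ, Finset.sum_powerset_apply_card
    (fun k => 2 ^ max k (n - k) * M ^ (n - k)), Finset.card_univ, ZMod.card]
  rfl

end Counting

end XShift

open XShift in
theorem xshift_periodic_point_count_general (M n : ℕ) (hn : 1 ≤ n) :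
    (Even n →
      (pX M n : ℤ) =
        (2 * (M : ℤ) + 1) ^ n + ((M : ℤ) + 2) ^ n
          - ∑ i ∈ Finset.range (n / 2 + 1),
              (n.choose i : ℤ) * 2 ^ i * ((M : ℤ) ^ i + (M : ℤ) ^ (n - i))
          + (n.choose (n / 2) : ℤ) * (2 * (M : ℤ)) ^ (n / 2)) ∧
    (Odd n →
      (pX M n : ℤ) =
        (2 * (M : ℤ) + 1) ^ n + ((M : ℤ) + 2) ^ n
          - ∑ i ∈ Finset.range ((n - 1) / 2 + 1),
              (n.choose i : ℤ) * 2 ^ i * ((M : ℤ) ^ i + (M : ℤ) ^ (n - i))) := by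
  have : NeZero n := ⟨by omega⟩
  have hpX : (pX M n : ℤ) = (2 * (M : ℤ) + 1) ^ n + ((M : ℤ) + 2) ^ n
      - ∑ i ∈ Finset.range ((n + 1) / 2), (n.choose i : ℤ) * (2 * (M : ℤ)) ^ i
      - ∑ i ∈ Finset.range (n / 2 + 1), (n.choose i : ℤ) * 2 ^ i * (M : ℤ) ^ (n - i) := by
    rw [pX_eq_sum, ← sum_choose_mul_two_pow_max]
    push_cast
    rfl
  have hsplit : ∀ m, ∑ i ∈ Finset.range m, (n.choose i : ℤ) * 2 ^ i * ((M : ℤ) ^ i + M ^ (n - i)) =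
      ∑ i ∈ Finset.range m, (n.choose i : ℤ) * (2 * (M : ℤ)) ^ i +
        ∑ i ∈ Finset.range m, (n.choose i : ℤ) * 2 ^ i * (M : ℤ) ^ (n - i) := fun m => by
    rw [← Finset.sum_add_distrib]
    exact Finset.sum_congr rfl fun i _ => by ring
  refine ⟨fun ⟨k, hk⟩ => ?_, fun ⟨k, hk⟩ => ?_⟩
  · rw [hpX, hsplit, show (n + 1) / 2 = n / 2 by omega, Finset.sum_range_succ
    (fun i => (n.choose i : ℤ) * (2 * (M : ℤ)) ^ i)]
    ring
  · rw [hpX, hsplit, show (n + 1) / 2 = (n - 1) / 2 + 1 by omega, show n / 2 = (n - 1) / 2 by omega]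
    ring

open XShift in
/-- The number of `n`-periodic points of `X(M)`:
for even `n`, `p_n = (2M+1)ⁿ + (M+2)ⁿ − ∑_{i=0}^{n/2} C(n,i)2ⁱ(Mⁱ + M^{n−i}) + C(n,n/2)(2M)^{n/2}`;
for odd `n`, `p_n = (2M+1)ⁿ + (M+2)ⁿ − ∑_{i=0}^{(n−1)/2} C(n,i)2ⁱ(Mⁱ + M^{n−i})`. -/
theorem xshift_periodic_point_count (M n : ℕ) (hM : 1 ≤ M) (hn : 1 ≤ n) :
    (Even n →
      (pX M n : ℤ) =
        (2 * (M : ℤ) + 1) ^ n + ((M : ℤ) + 2) ^ n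
          - ∑ i ∈ Finset.range (n / 2 + 1),
              (n.choose i : ℤ) * 2 ^ i * ((M : ℤ) ^ i + (M : ℤ) ^ (n - i))
          + (n.choose (n / 2) : ℤ) * (2 * (M : ℤ)) ^ (n / 2)) ∧
    (Odd n →
      (pX M n : ℤ) =
        (2 * (M : ℤ) + 1) ^ n + ((M : ℤ) + 2) ^ n
          - ∑ i ∈ Finset.range ((n - 1) / 2 + 1),
              (n.choose i : ℤ) * 2 ^ i * ((M : ℤ) ^ i + (M : ℤ) ^ (n - i))) :=
  xshift_periodic_point_count_general M n hn
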